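/- arXiv:2602.15240 — 2 statements merged into one kernel-verified Lean document; each statement's English description precedes it below -/
import Mathlib

section
/- Let Ω ⊂ ℂⁿ be a pseudoconvex domain. If two hermitian ellipsoids E₀, E₁ (centered at 0) are contained in Ω, then every ellipsoid on the geodesic in the symmetric space of hermitian ellipsoids joining E₀ to E₁ is also contained in Ω. Concretely: if A is the positive h₀-self-adjoint operator with A(E₀) = E₁, then A^t(E₀) ⊂ Ω for all t ∈ [0,1]. -/
open Complex MeasureTheory Bornology

set_option maxHeartbeats 1600000

/-- A positive definite hermitian form on `ℂⁿ` (linear in the first argument,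
conjugate-linear in the second). -/
structure PosDefHermForm (n : ℕ) where
  form : (Fin n → ℂ) → (Fin n → ℂ) → ℂ
  add_left : ∀ z z' w, form (z + z') w = form z w + form z' w
  smul_left : ∀ (a : ℂ) (z w : Fin n → ℂ), form (a • z) w = a * form z w
  conj_symm : ∀ z w, form z w = starRingEnd ℂ (form w z)
  posdef : ∀ z, z ≠ 0 → 0 < (form z z).re

/-- The hermitian ellipsoid `E_h = {z : h(z,z) < 1}`. -/
def PosDefHermForm.ball {n : ℕ} (h : PosDefHermForm n) : Set (Fin n → ℂ) :=
  {z | (h.form z z).re < 1}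

/-- Plurisubharmonicity via the sub-mean-value inequality on complex lines
(the standard characterization for continuous functions). -/
def PlurisubharmonicOn {n : ℕ} (u : (Fin n → ℂ) → ℝ) (Ω : Set (Fin n → ℂ)) : Prop :=
  ∀ (a b : Fin n → ℂ) (r : ℝ), 0 < r →
    (∀ lam : ℂ, ‖lam‖ ≤ r → a + lam • b ∈ Ω) →
    u a ≤ (2 * Real.pi)⁻¹ *
      ∫ t in (0:ℝ)..(2 * Real.pi), u (a + ((r : ℂ) * Complex.exp ((t : ℂ) * Complex.I)) • b)

/-- Pseudoconvexity: an open set admitting a continuous plurisubharmonic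
exhaustion function. -/
def IsPseudoconvex {n : ℕ} (Ω : Set (Fin n → ℂ)) : Prop :=
  IsOpen Ω ∧ ∃ u : (Fin n → ℂ) → ℝ, ContinuousOn u Ω ∧ PlurisubharmonicOn u Ω ∧
    ∀ c : ℝ, IsCompact {z | z ∈ Ω ∧ u z ≤ c}

/-!
Write `A = exp M` with `M = log A` and put `U c = exp (c M)` for `c` in the strip `0 ≤ re c ≤ 1`.
For a compact `h`-ball `Z ⊆ E₀`, each `c ↦ U c z` (`z ∈ Z`) is holomorphic on the strip with
boundary values in `E₀ ∪ A(E₀)`, and since `U (i y)` is `h`-unitary the image of the whole strip is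
the compact set `⋃ s ∈ [0,1], U s (Z)`. Dilating `Z` by `σ ∈ [0,1]`, the set of `σ` for which these
images lie in `Ω` contains `0` and is open; it is also closed, because by the maximum principle on
the strip the psh exhaustion `u` stays below its maximum `M` on `E₀ ∪ A(E₀)`, so the images lie in
the compact sublevel set `{u ≤ M}`. The maximum principle holds for smooth psh `v`, since `v ∘ G`
then has nonnegative Laplacian, and passes to `u` by mollification.
-/

set_option autoImplicit false

open Set Filter Topology Metric
open scoped Real Convolution

section Calculus

theorem IsLocalMax.deriv_deriv_nonpos {f : ℝ → ℝ} {x₀ : ℝ} (hf : IsLocalMax f x₀)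
    (hc : ContinuousAt f x₀) : deriv (deriv f) x₀ ≤ 0 := by
  by_contra! hpos
  have hconst : f =ᶠ[𝓝 x₀] fun _ => f x₀ := by
    filter_upwards [hf, isLocalMin_of_deriv_deriv_pos hpos hf.deriv_eq_zero hc] with x h₁ h₂
    exact le_antisymm h₁ h₂
  have hderiv : deriv f =ᶠ[𝓝 x₀] fun _ => 0 := by
    filter_upwards [hconst.eventuallyEq_nhds] with x hx
    simp [hx.deriv_eq]
  simp [hderiv.deriv_eq] at hpos

theorem IsLocalMax.nonpos_of_hasDerivAt {f f' : ℝ → ℝ} {f'' x₀ : ℝ} (hf : IsLocalMax f x₀)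
    (hf' : ∀ x, HasDerivAt f (f' x) x) (hf'' : HasDerivAt f' f'' x₀) : f'' ≤ 0 := by
  have hd : deriv f = f' := funext fun x => (hf' x).deriv
  simpa [hd, hf''.deriv] using hf.deriv_deriv_nonpos (hf' x₀).continuousAt

theorem le_taylor_two_of_hasDerivAt {g g' g'' : ℝ → ℝ} {K : ℝ}
    (hg : ∀ s, HasDerivAt g (g' s) s) (hg' : ∀ s, HasDerivAt g' (g'' s) s)
    (hK : ∀ s ∈ Icc (0:ℝ) 1, g'' s ≤ K) : g 1 ≤ g 0 + g' 0 + K / 2 := by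
  set φ : ℝ → ℝ := fun s => g 0 + s * g' 0 + s ^ 2 / 2 * K - g s
  set φ' : ℝ → ℝ := fun s => g' 0 + s * K - g' s
  have hφ : ∀ s, HasDerivAt φ (φ' s) s := fun s =>
    ((((hasDerivAt_id s).mul_const (g' 0)).const_add (g 0)).add
      (((hasDerivAt_pow 2 s).div_const 2).mul_const K) |>.sub (hg s)).congr_deriv
      (by simp [φ'])
  have hφ' : ∀ s, HasDerivAt φ' (K - g'' s) s := fun s =>
    ((((hasDerivAt_id s).mul_const K).const_add (g' 0)).sub (hg' s)).congr_deriv (by simp)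
  have hmono' : MonotoneOn φ' (Icc 0 1) :=
    monotoneOn_of_hasDerivWithinAt_nonneg (convex_Icc 0 1)
      (fun s _ => (hφ' s).continuousAt.continuousWithinAt) (fun s _ => (hφ' s).hasDerivWithinAt)
      (fun s hs => sub_nonneg.2 (hK s (interior_subset hs)))
  have hmono : MonotoneOn φ (Icc 0 1) :=
    monotoneOn_of_hasDerivWithinAt_nonneg (convex_Icc 0 1)
      (fun s _ => (hφ s).continuousAt.continuousWithinAt) (fun s _ => (hφ s).hasDerivWithinAt)
      (fun s hs => by
        rw [interior_Icc] at hs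
        simpa [φ'] using hmono' (left_mem_Icc.2 zero_le_one) (Ioo_subset_Icc_self hs) hs.1.le)
  have := hmono (left_mem_Icc.2 zero_le_one) (right_mem_Icc.2 zero_le_one) zero_le_one
  simp only [φ] at this
  linarith

theorem integral_trig_quadratic (c₀ c₁ c₂ c₃ c₄ c₅ : ℝ) :
    ∫ t in (0:ℝ)..2 * π, (c₀ + c₁ * Real.cos t + c₂ * Real.sin t + c₃ * Real.cos t ^ 2
      + c₄ * (Real.sin t * Real.cos t) + c₅ * Real.sin t ^ 2) = 2 * π * c₀ + π * (c₃ + c₅) := by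
  have hi : ∀ f : ℝ → ℝ, Continuous f → IntervalIntegrable f volume 0 (2 * π) :=
    fun f hf => hf.intervalIntegrable _ _
  rw [intervalIntegral.integral_add (hi _ (by fun_prop)) (hi _ (by fun_prop)),
    intervalIntegral.integral_add (hi _ (by fun_prop)) (hi _ (by fun_prop)),
    intervalIntegral.integral_add (hi _ (by fun_prop)) (hi _ (by fun_prop)),
    intervalIntegral.integral_add (hi _ (by fun_prop)) (hi _ (by fun_prop)),
    intervalIntegral.integral_add (hi _ (by fun_prop)) (hi _ (by fun_prop))]
  simp only [intervalIntegral.integral_const_mul, intervalIntegral.integral_const, integral_cos,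
    integral_sin, integral_cos_sq, integral_sin_sq, integral_sin_mul_cos₁, Real.sin_two_pi,
    Real.cos_two_pi, Real.sin_zero, Real.cos_zero, smul_eq_mul]
  ring

theorem IsCompact.exists_mem_frontier_le_of_not_isLocalMax {X : Type*} [TopologicalSpace X]
    {K : Set X} (hK : IsCompact K) {f : X → ℝ} (hf : ContinuousOn f K)
    (hloc : ∀ x ∈ interior K, ¬ IsLocalMax f x) {x : X} (hx : x ∈ K) :
    ∃ y ∈ frontier K, f x ≤ f y := by
  obtain ⟨y, hyK, hmax⟩ := hK.exists_isMaxOn ⟨x, hx⟩ hf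
  refine ⟨y, ⟨subset_closure hyK, fun hy => hloc y hy ?_⟩, hmax hx⟩
  exact hmax.isLocalMax (mem_interior_iff_mem_nhds.1 hy)

end Calculus

section SecondOrderTaylor

variable {F : Type*} [NormedAddCommGroup F] [NormedSpace ℝ F] {v : F → ℝ}

theorem ContDiff.hasDerivAt_comp_curve (hv : ContDiff ℝ 2 v) {γ : ℝ → F} {γ' : F} {s : ℝ}
    (hγ : HasDerivAt γ γ' s) : HasDerivAt (fun s => v (γ s)) (fderiv ℝ v (γ s) γ') s :=
  ((hv.differentiable (by norm_num)) (γ s)).hasFDerivAt.comp_hasDerivAt s hγ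

theorem ContDiff.hasDerivAt_fderiv_comp_curve (hv : ContDiff ℝ 2 v) {γ γ' : ℝ → F} {γ'' : F}
    {s : ℝ} (hγ : ∀ s, HasDerivAt γ (γ' s) s) (hγ' : HasDerivAt γ' γ'' s) :
    HasDerivAt (fun s => fderiv ℝ v (γ s) (γ' s))
      (fderiv ℝ (fderiv ℝ v) (γ s) (γ' s) (γ' s) + fderiv ℝ v (γ s) γ'') s := by
  have hv' : ContDiff ℝ 1 (fderiv ℝ v) := hv.fderiv_right (by norm_num)
  exact ((hv'.differentiable one_ne_zero (γ s)).hasFDerivAt.comp_hasDerivAt s (hγ s)).clm_apply hγ'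

theorem ContDiff.le_add_fderiv_add_of_fderiv_fderiv_le (hv : ContDiff ℝ 2 v) {a y : F} {K : ℝ}
    (hK : ∀ s ∈ Icc (0:ℝ) 1, fderiv ℝ (fderiv ℝ v) (a + s • y) y y ≤ K) :
    v (a + y) ≤ v a + fderiv ℝ v a y + K / 2 := by
  have hγ : ∀ s : ℝ, HasDerivAt (fun s : ℝ => a + s • y) y s := fun s => by
    simpa using ((hasDerivAt_id s).smul_const y).const_add a
  simpa using le_taylor_two_of_hasDerivAt (fun s => hv.hasDerivAt_comp_curve (hγ s))
    (fun s => by simpa using hv.hasDerivAt_fderiv_comp_curve hγ (hasDerivAt_const s y)) hK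

theorem ContDiff.le_add_fderiv_add_of_norm_sub_le (hv : ContDiff ℝ 2 v) {a y : F} {ε : ℝ}
    (hε : ∀ p ∈ closedBall a ‖y‖, ‖fderiv ℝ (fderiv ℝ v) p - fderiv ℝ (fderiv ℝ v) a‖ ≤ ε) :
    v (a + y) ≤ v a + fderiv ℝ v a y + (fderiv ℝ (fderiv ℝ v) a y y + ε * ‖y‖ ^ 2) / 2 := by
  refine hv.le_add_fderiv_add_of_fderiv_fderiv_le fun s hs => ?_
  have hp : a + s • y ∈ closedBall a ‖y‖ := by
    rw [mem_closedBall, dist_eq_norm, add_sub_cancel_left, norm_smul, Real.norm_of_nonneg hs.1]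
    exact mul_le_of_le_one_left (norm_nonneg y) hs.2
  have h := (fderiv ℝ (fderiv ℝ v) (a + s • y) - fderiv ℝ (fderiv ℝ v) a).le_opNorm₂ y y
  have hεy : ‖fderiv ℝ (fderiv ℝ v) (a + s • y) - fderiv ℝ (fderiv ℝ v) a‖ * ‖y‖ * ‖y‖
      ≤ ε * ‖y‖ * ‖y‖ := by gcongr; exact hε _ hp
  rw [sub_apply, sub_apply, Real.norm_eq_abs] at h
  nlinarith [le_abs_self (fderiv ℝ (fderiv ℝ v) (a + s • y) y y - fderiv ℝ (fderiv ℝ v) a y y)]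

end SecondOrderTaylor

section LineLaplacian

variable {E : Type*} [NormedAddCommGroup E] [NormedSpace ℂ E]

/-- Four times the Levi form of `v` at `p` in the direction `w`, i.e. the Laplacian of
`c ↦ v (p + c • w)` at `c = 0`. -/
noncomputable def lineLaplacian (v : E → ℝ) (p w : E) : ℝ :=
  fderiv ℝ (fderiv ℝ v) p w w + fderiv ℝ (fderiv ℝ v) p (I • w) (I • w)

theorem lineLaplacian_smul (v : E → ℝ) (p w : E) (r : ℝ) :
    lineLaplacian v p (r • w) = r ^ 2 * lineLaplacian v p w := by
  simp only [lineLaplacian, smul_comm I r, map_smul, smul_apply, smul_eq_mul]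
  ring

theorem exp_mul_I_smul (t : ℝ) (w : E) :
    exp (t * I) • w = Real.cos t • w + Real.sin t • (I • w) := by
  rw [exp_mul_I, add_smul, mul_smul, ← ofReal_cos, ← ofReal_sin, coe_smul, coe_smul]

theorem circleMean_quadratic (c : ℝ) (ℓ : E →L[ℝ] ℝ) (Q : E →L[ℝ] E →L[ℝ] ℝ) (w : E) :
    (2 * π)⁻¹ * ∫ t in (0:ℝ)..2 * π,
      (c + ℓ (exp (t * I) • w) + Q (exp (t * I) • w) (exp (t * I) • w))
      = c + (Q w w + Q (I • w) (I • w)) / 2 := by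
  have h : ∀ t : ℝ, c + ℓ (exp (t * I) • w) + Q (exp (t * I) • w) (exp (t * I) • w)
      = c + ℓ w * Real.cos t + ℓ (I • w) * Real.sin t + Q w w * Real.cos t ^ 2
        + (Q w (I • w) + Q (I • w) w) * (Real.sin t * Real.cos t)
        + Q (I • w) (I • w) * Real.sin t ^ 2 := fun t => by
    simp only [exp_mul_I_smul, map_add, map_smul, add_apply, smul_apply, smul_eq_mul]
    ring
  simp only [h, integral_trig_quadratic]
  field_simp

theorem circleMean_le_add_lineLaplacian {v : E → ℝ} (hv : ContDiff ℝ 2 v) {a w : E} {ε : ℝ}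
    (hε : ∀ p ∈ closedBall a ‖w‖, ‖fderiv ℝ (fderiv ℝ v) p - fderiv ℝ (fderiv ℝ v) a‖ ≤ ε) :
    (2 * π)⁻¹ * ∫ t in (0:ℝ)..2 * π, v (a + exp ((t : ℂ) * I) • w)
      ≤ v a + ε * ‖w‖ ^ 2 / 2 + lineLaplacian v a w / 4 := by
  have hbound : ∀ t : ℝ, v (a + exp (t * I) • w) ≤ v a + ε * ‖w‖ ^ 2 / 2
      + fderiv ℝ v a (exp (t * I) • w)
      + ((1 / 2 : ℝ) • fderiv ℝ (fderiv ℝ v) a) (exp (t * I) • w) (exp (t * I) • w) := by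
    intro t
    have hnorm : ‖exp (t * I) • w‖ = ‖w‖ := by rw [norm_smul, norm_exp_ofReal_mul_I, one_mul]
    refine (hv.le_add_fderiv_add_of_norm_sub_le (hnorm ▸ hε)).trans_eq ?_
    rw [hnorm, smul_apply, smul_apply, smul_eq_mul]
    ring
  calc _ ≤ (2 * π)⁻¹ * ∫ t in (0:ℝ)..2 * π, (v a + ε * ‖w‖ ^ 2 / 2
        + fderiv ℝ v a (exp (t * I) • w)
        + ((1 / 2 : ℝ) • fderiv ℝ (fderiv ℝ v) a) (exp (t * I) • w) (exp (t * I) • w)) := by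
        gcongr
        exact intervalIntegral.integral_mono_on (by positivity)
          (Continuous.intervalIntegrable (by fun_prop) _ _)
          (Continuous.intervalIntegrable (by fun_prop) _ _) fun t _ => hbound t
    _ = _ := by
        rw [circleMean_quadratic]
        simp only [lineLaplacian, smul_apply, smul_eq_mul]
        ring

theorem lineLaplacian_nonneg_of_circleMean {v : E → ℝ} (hv : ContDiff ℝ 2 v) {a w : E}
    {r₀ : ℝ} (hr₀ : 0 < r₀)
    (hsub : ∀ r : ℝ, 0 < r → r ≤ r₀ →
      v a ≤ (2 * π)⁻¹ * ∫ t in (0:ℝ)..2 * π, v (a + ((r : ℂ) * exp (t * I)) • w)) :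
    0 ≤ lineLaplacian v a w := by
  by_contra! hneg
  set ε := -lineLaplacian v a w / (4 * (‖w‖ ^ 2 + 1))
  have hε : 0 < ε := div_pos (by linarith) (by positivity)
  have hcont : Continuous (fderiv ℝ (fderiv ℝ v)) :=
    (hv.fderiv_right (m := 1) (by norm_num)).continuous_fderiv one_ne_zero
  obtain ⟨ρ, hρ, hnear⟩ :=
    (Metric.continuousAt_iff (f := fderiv ℝ (fderiv ℝ v)) (a := a)).1 hcont.continuousAt ε hε
  set r := min r₀ (ρ / 2 / (‖w‖ + 1))
  have hr : 0 < r := lt_min hr₀ (by positivity)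
  have hrw : ‖r • w‖ < ρ := by
    calc ‖r • w‖ ≤ ρ / 2 / (‖w‖ + 1) * (‖w‖ + 1) := by
          rw [norm_smul, Real.norm_of_nonneg hr.le]
          gcongr
          exacts [min_le_right _ _, by linarith]
      _ < ρ := by rw [div_mul_cancel₀ _ (by positivity)]; linarith
  have hmean : v a ≤ v a + ε * ‖r • w‖ ^ 2 / 2 + lineLaplacian v a (r • w) / 4 := by
    refine (hsub r hr (min_le_left _ _)).trans_eq ?_ |>.trans
      (circleMean_le_add_lineLaplacian hv fun p hp => ?_)
    · simp_rw [mul_comm (r : ℂ), mul_smul, coe_smul]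
    · exact ((dist_eq_norm (fderiv ℝ (fderiv ℝ v) p) _).symm.trans_lt
        (hnear ((mem_closedBall.1 hp).trans_lt hrw))).le
  have hεw : ε * ‖w‖ ^ 2 ≤ -lineLaplacian v a w / 4 := by
    rw [div_mul_eq_mul_div, div_le_div_iff₀ (by positivity) (by norm_num)]
    nlinarith [sq_nonneg ‖w‖]
  rw [lineLaplacian_smul, norm_smul, Real.norm_of_nonneg hr.le] at hmean
  nlinarith [pow_pos hr 2]

end LineLaplacian

section StripMaximumPrinciple

variable {E : Type*} [NormedAddCommGroup E] [NormedSpace ℂ E]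

theorem hasDerivAt_comp_add_mul_ofReal {G : ℂ → E} (hG : Differentiable ℂ G) (c d : ℂ)
    (s : ℝ) : HasDerivAt (fun s : ℝ => G (c + s * d)) (d • deriv G (c + s * d)) s := by
  have hline : HasDerivAt (fun s : ℝ => c + (s : ℂ) * d) d s := by
    simpa using ((hasDerivAt_id s).ofReal_comp.mul_const d).const_add c
  exact (hG _).hasDerivAt.scomp s hline

theorem ContDiff.hasDerivAt_fderiv_comp_holomorphic_line [CompleteSpace E] {v : E → ℝ}
    (hv : ContDiff ℝ 2 v) {G : ℂ → E} (hG : Differentiable ℂ G) (c d : ℂ) :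
    HasDerivAt (fun s : ℝ => fderiv ℝ v (G (c + s * d)) (d • deriv G (c + s * d)))
      (fderiv ℝ (fderiv ℝ v) (G c) (d • deriv G c) (d • deriv G c)
        + fderiv ℝ v (G c) ((d * d) • deriv (deriv G) c)) 0 := by
  simpa [smul_smul] using hv.hasDerivAt_fderiv_comp_curve (hasDerivAt_comp_add_mul_ofReal hG c d)
    ((hasDerivAt_comp_add_mul_ofReal hG.deriv c d 0).const_smul d)

theorem hasDerivAt_re_add_mul_ofReal (c d : ℂ) (s : ℝ) :
    HasDerivAt (fun s : ℝ => (c + s * d).re) d.re s := by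
  simpa using ((hasDerivAt_id s).mul_const d.re).const_add c.re

theorem hasDerivAt_im_add_mul_ofReal (c d : ℂ) (s : ℝ) :
    HasDerivAt (fun s : ℝ => (c + s * d).im) d.im s := by
  simpa using ((hasDerivAt_id s).mul_const d.im).const_add c.im

theorem hasDerivAt_quadratic_add_mul_ofReal (η : ℝ) (c d : ℂ) (s : ℝ) :
    HasDerivAt (fun s : ℝ => η * (2 * (c + s * d).re ^ 2 - (c + s * d).im ^ 2))
      (η * (4 * d.re * (c + s * d).re - 2 * d.im * (c + s * d).im)) s :=
  ((((hasDerivAt_re_add_mul_ofReal c d s).pow 2).const_mul 2).sub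
    ((hasDerivAt_im_add_mul_ofReal c d s).pow 2)).const_mul η |>.congr_deriv (by ring)

theorem hasDerivAt_deriv_quadratic_add_mul_ofReal (η : ℝ) (c d : ℂ) (s : ℝ) :
    HasDerivAt (fun s : ℝ => η * (4 * d.re * (c + s * d).re - 2 * d.im * (c + s * d).im))
      (η * (4 * d.re ^ 2 - 2 * d.im ^ 2)) s :=
  (((hasDerivAt_re_add_mul_ofReal c d s).const_mul (4 * d.re)).sub
    ((hasDerivAt_im_add_mul_ofReal c d s).const_mul (2 * d.im))).const_mul η
    |>.congr_deriv (by ring)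

theorem not_isLocalMax_add_quadratic [CompleteSpace E] {v : E → ℝ} (hv : ContDiff ℝ 2 v)
    {G : ℂ → E} (hG : Differentiable ℂ G) {c : ℂ}
    (hL : 0 ≤ lineLaplacian v (G c) (deriv G c)) {η : ℝ} (hη : 0 < η) :
    ¬ IsLocalMax (fun μ : ℂ => v (G μ) + η * (2 * μ.re ^ 2 - μ.im ^ 2)) c := by
  intro hmax
  have along : ∀ d : ℂ, fderiv ℝ (fderiv ℝ v) (G c) (d • deriv G c) (d • deriv G c)
      + fderiv ℝ v (G c) ((d * d) • deriv (deriv G) c) + η * (4 * d.re ^ 2 - 2 * d.im ^ 2)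
      ≤ 0 := by
    intro d
    have hline : IsLocalMax (fun s : ℝ => v (G (c + s * d))
        + η * (2 * (c + s * d).re ^ 2 - (c + s * d).im ^ 2)) 0 := by
      have h0 : c = c + ((0:ℝ) : ℂ) * d := by simp
      exact IsLocalMax.comp_continuous (g := fun s : ℝ => c + s * d) (h0 ▸ hmax) (by fun_prop)
    exact hline.nonpos_of_hasDerivAt
      (fun s => (hv.hasDerivAt_comp_curve (hasDerivAt_comp_add_mul_ofReal hG c d s)).add
        (hasDerivAt_quadratic_add_mul_ofReal η c d s))
      ((hv.hasDerivAt_fderiv_comp_holomorphic_line hG c d).add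
        (hasDerivAt_deriv_quadratic_add_mul_ofReal η c d 0))
  -- adding the directions `1` and `I`, the terms in `deriv (deriv G)` cancel since `I * I = -1`
  have h1 := along 1
  have hI := along I
  simp only [one_smul, one_mul, I_mul_I, neg_smul, one_re, one_im, I_re, I_im, map_neg] at h1 hI
  unfold lineLaplacian at hL
  nlinarith

variable [CompleteSpace E] {v : E → ℝ} {G : ℂ → E} {B M : ℝ}

theorem ContDiff.add_quadratic_le_of_mem_rectangle (hv : ContDiff ℝ 2 v)
    (hG : Differentiable ℂ G)
    (hL : ∀ c : ℂ, c.re ∈ Ioo 0 1 → 0 ≤ lineLaplacian v (G c) (deriv G c))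
    (hB : ∀ c : ℂ, c.re ∈ Icc 0 1 → v (G c) ≤ B)
    (hM : ∀ c : ℂ, c.re = 0 ∨ c.re = 1 → v (G c) ≤ M) {η T : ℝ} (hη : 0 < η)
    (hT : B - M ≤ η * T ^ 2) {c : ℂ} (hc : c ∈ Icc 0 1 ×ℂ Icc (-T) T) :
    v (G c) + η * (2 * c.re ^ 2 - c.im ^ 2) ≤ M + 2 * η := by
  set w : ℂ → ℝ := fun μ => v (G μ) + η * (2 * μ.re ^ 2 - μ.im ^ 2)
  have hw : Continuous w := (hv.continuous.comp hG.continuous).add (by fun_prop)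
  obtain ⟨μ, hμ, hcμ⟩ :=
    (isCompact_Icc.reProdIm isCompact_Icc).exists_mem_frontier_le_of_not_isLocalMax
    hw.continuousOn (fun μ hμ => by
      rw [interior_reProdIm, interior_Icc, interior_Icc] at hμ
      exact not_isLocalMax_add_quadratic hv hG (hL μ hμ.1) hη) hc
  refine hcμ.trans ?_
  have hT0 : -T ≤ T := hc.2.1.trans hc.2.2
  rw [frontier_reProdIm, closure_Icc, closure_Icc, frontier_Icc hT0, frontier_Icc zero_le_one] at hμ
  rcases hμ with ⟨hre, him⟩ | ⟨hre, -⟩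
  · have hre' : μ.re ∈ Icc 0 1 := hre
    have him2 : μ.im ^ 2 = T ^ 2 := by
      rcases (him : μ.im = -T ∨ μ.im = T) with h | h <;> rw [h]; ring
    have hre2 : μ.re ^ 2 ≤ 1 := by nlinarith [hre'.1, hre'.2]
    simp only [w, him2]
    nlinarith [hB μ hre', mul_le_mul_of_nonneg_left hre2 hη.le]
  · have hre2 : μ.re = 0 ∨ μ.re = 1 := hre
    have := hM μ hre2
    simp only [w]
    rcases hre2 with h | h <;> simp only [h] <;> nlinarith [sq_nonneg μ.im]

theorem ContDiff.le_of_strip (hv : ContDiff ℝ 2 v) (hG : Differentiable ℂ G)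
    (hL : ∀ c : ℂ, c.re ∈ Ioo 0 1 → 0 ≤ lineLaplacian v (G c) (deriv G c))
    (hB : ∀ c : ℂ, c.re ∈ Icc 0 1 → v (G c) ≤ B)
    (hM : ∀ c : ℂ, c.re = 0 ∨ c.re = 1 → v (G c) ≤ M) {c : ℂ} (hc : c.re ∈ Icc 0 1) :
    v (G c) ≤ M := by
  refine le_of_forall_pos_le_add fun ε hε => ?_
  set η := ε / (c.im ^ 2 + 2)
  have hη : 0 < η := by positivity
  -- the height `T` of the rectangle makes the term `-η im²` beat the bound `B` on its
  -- horizontal edges, so only the vertical edges `re = 0, 1` matter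
  set T := 1 + |c.im| + |B - M| / η
  have hBM : 0 ≤ |B - M| / η := by positivity
  have hT1 : 1 ≤ T := by simp only [T]; linarith [abs_nonneg c.im]
  have hT : B - M ≤ η * T ^ 2 := by
    have h : |B - M| ≤ η * T := by
      rw [← div_le_iff₀' hη]; simp only [T]; linarith [abs_nonneg c.im]
    nlinarith [le_abs_self (B - M),
      mul_nonneg hη.le (mul_nonneg (zero_le_one.trans hT1) (sub_nonneg.2 hT1))]
  have hcT : c ∈ Icc 0 1 ×ℂ Icc (-T) T := ⟨hc, abs_le.1 (by simp only [T]; linarith)⟩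
  have h := hv.add_quadratic_le_of_mem_rectangle hG hL hB hM hη hT hcT
  have hηε : η * (c.im ^ 2 + 2) = ε := by simp only [η]; field_simp
  nlinarith [sq_nonneg c.re]

end StripMaximumPrinciple

section Mollification

open ContinuousLinearMap

theorem ContDiffBump.normed_convolution_apply {E : Type*} [NormedAddCommGroup E]
    [NormedSpace ℝ E] [HasContDiffBump E] [MeasurableSpace E] (μ : Measure E) {g : E → ℝ}
    (φ : ContDiffBump (0 : E)) (x : E) :
    (φ.normed μ ⋆[lsmul ℝ ℝ, μ] g) x = ∫ y, φ.normed μ y * g (x - y) ∂μ := by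
  simp [convolution_def]

variable {E : Type*} [NormedAddCommGroup E] [NormedSpace ℂ E] [FiniteDimensional ℝ E]
  [MeasurableSpace E] [BorelSpace E] (μ : Measure E) [μ.IsAddHaarMeasure]

theorem ContDiffBump.integral_normed_convolution_comp {g : E → ℝ} (hg : Continuous g)
    (φ : ContDiffBump (0 : E)) {γ : ℝ → E} (hγ : Continuous γ) {a b : ℝ} (hab : a ≤ b) :
    ∫ t in a..b, (φ.normed μ ⋆[lsmul ℝ ℝ, μ] g) (γ t)
      = ∫ y, φ.normed μ y * (∫ t in a..b, g (γ t - y)) ∂μ := by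
  set H : ℝ × E → ℝ := fun q => φ.normed μ q.2 * g (γ q.1 - q.2)
  have hH : Integrable H ((volume.restrict (Ioc a b)).prod μ) := by
    rw [Measure.restrict_prod_eq_prod_univ]
    refine ((φ.continuous_normed.comp continuous_snd).mul (hg.comp (by fun_prop))).continuousOn
      |>.integrableOn_compact
        ((isCompact_Icc (a := a) (b := b)).prod (isCompact_closedBall 0 φ.rOut))
      |>.of_forall_sdiff_eq_zero (measurableSet_Ioc.prod MeasurableSet.univ) fun q hq => ?_
    have hq : q.2 ∉ tsupport (φ.normed μ) := fun h =>
      hq.2 ⟨Ioc_subset_Icc_self hq.1.1, φ.tsupport_normed_eq (μ := μ) ▸ h⟩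
    simp [image_eq_zero_of_notMem_tsupport hq]
  simp only [intervalIntegral.integral_of_le hab, φ.normed_convolution_apply μ,
    ← MeasureTheory.integral_const_mul]
  exact integral_integral_swap (f := fun t y => H (t, y)) hH

theorem ContDiffBump.normed_convolution_le_circleMean {g : E → ℝ} (hg : Continuous g)
    (φ : ContDiffBump (0 : E)) {a w : E} {r : ℝ}
    (hsub : ∀ x ∈ closedBall a φ.rOut,
      g x ≤ (2 * π)⁻¹ * ∫ t in (0:ℝ)..2 * π, g (x + ((r : ℂ) * exp (t * I)) • w)) :
    (φ.normed μ ⋆[lsmul ℝ ℝ, μ] g) a ≤ (2 * π)⁻¹ *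
      ∫ t in (0:ℝ)..2 * π, (φ.normed μ ⋆[lsmul ℝ ℝ, μ] g) (a + ((r : ℂ) * exp (t * I)) • w) := by
  rw [φ.integral_normed_convolution_comp μ hg (by fun_prop) (by positivity),
    φ.normed_convolution_apply μ, ← MeasureTheory.integral_const_mul]
  have hmean : Continuous fun y =>
      ∫ t in (0:ℝ)..2 * π, g (a + ((r : ℂ) * exp (t * I)) • w - y) := by
    fun_prop
  refine integral_mono
    ((φ.continuous_normed.mul (hg.comp (by fun_prop))).integrable_of_hasCompactSupport
      φ.hasCompactSupport_normed.mul_right)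
    (((φ.continuous_normed.mul hmean).integrable_of_hasCompactSupport
      φ.hasCompactSupport_normed.mul_right).const_mul _) fun y => ?_
  by_cases hy : y ∈ closedBall 0 φ.rOut
  · have h := hsub (a - y) (by simpa [dist_eq_norm] using hy)
    simp only [sub_add_eq_add_sub] at h
    rw [mul_left_comm]
    exact mul_le_mul_of_nonneg_left h (φ.nonneg_normed y)
  · have hy : y ∉ tsupport (φ.normed μ) := φ.tsupport_normed_eq (μ := μ) ▸ hy
    simp [image_eq_zero_of_notMem_tsupport hy]

end Mollification

section Plurisubharmonic

variable {n : ℕ} {Ω : Set (Fin n → ℂ)} {u : (Fin n → ℂ) → ℝ}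

theorem PlurisubharmonicOn.le_circleMean_of_eqOn (hps : PlurisubharmonicOn u Ω)
    {N : Set (Fin n → ℂ)} (hNΩ : N ⊆ Ω) {g : (Fin n → ℂ) → ℝ} (hgu : EqOn g u N)
    {a w : Fin n → ℂ} {r : ℝ} (hr : 0 < r) (hdisc : ∀ c : ℂ, ‖c‖ ≤ r → a + c • w ∈ N) :
    g a ≤ (2 * π)⁻¹ * ∫ t in (0:ℝ)..2 * π, g (a + ((r : ℂ) * exp (t * I)) • w) := by
  have hcircle : ∀ t : ℝ, ‖(r : ℂ) * exp (t * I)‖ ≤ r := fun t => by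
    rw [norm_mul, norm_exp_ofReal_mul_I, mul_one, norm_real, Real.norm_of_nonneg hr.le]
  rw [hgu (by simpa using hdisc 0 (by simpa using hr.le)),
    intervalIntegral.integral_congr fun t _ => hgu (hdisc _ (hcircle t))]
  exact hps a w r hr fun c hc => hNΩ (hdisc c hc)

theorem PlurisubharmonicOn.exists_contDiff_approx (hΩ : IsOpen Ω) (hu : ContinuousOn u Ω)
    (hps : PlurisubharmonicOn u Ω) {Y : Set (Fin n → ℂ)} (hY : IsCompact Y) (hYΩ : Y ⊆ Ω)
    {ε : ℝ} (hε : 0 < ε) :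
    ∃ v : (Fin n → ℂ) → ℝ, ContDiff ℝ 2 v ∧ (∀ x ∈ Y, |v x - u x| ≤ ε) ∧
      ∀ x ∈ Y, ∀ w, 0 ≤ lineLaplacian v x w := by
  obtain ⟨δ, hδ, hδΩ⟩ := hY.exists_cthickening_subset_open hΩ hYΩ
  set N := cthickening δ Y
  have hN : IsCompact N := hY.cthickening
  -- mollify a continuous extension `g` of `u` from the compact neighbourhood `N` of `Y`
  obtain ⟨g, hg⟩ := ContinuousMap.exists_restrict_eq hN.isClosed
    ⟨N.domRestrict u, (hu.mono hδΩ).domRestrict⟩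
  have hgu : EqOn g u N := fun x hx => congr($hg ⟨x, hx⟩)
  obtain ⟨ρ₀, hρ₀, hunif⟩ := Metric.uniformContinuousOn_iff.1
    (hN.uniformContinuousOn_of_continuous g.continuous.continuousOn) ε hε
  set ρ := min (δ / 2) ρ₀
  have hρ : 0 < ρ := lt_min (by positivity) hρ₀
  set φ : ContDiffBump (0 : Fin n → ℂ) := ⟨ρ / 2, ρ, by positivity, by linarith⟩
  set v := φ.normed volume ⋆[ContinuousLinearMap.lsmul ℝ ℝ, volume] g
  have hv : ContDiff ℝ 2 v := φ.hasCompactSupport_normed.contDiff_convolution_left _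
    φ.contDiff_normed g.continuous.locallyIntegrable
  refine ⟨v, hv, fun x hx => ?_, fun x hx w => ?_⟩
  · have hxN : x ∈ N := self_subset_cthickening Y hx
    rw [← hgu hxN, ← Real.dist_eq]
    refine φ.dist_normed_convolution_le g.continuous.aestronglyMeasurable fun y hy => ?_
    have hyx : dist y x < ρ := hy
    have hyN : y ∈ N := mem_cthickening_of_dist_le y x δ Y hx
      (by linarith [min_le_left (δ / 2) ρ₀])
    exact (hunif y hyN x hxN (hyx.trans_le (min_le_right _ _))).le
  · refine lineLaplacian_nonneg_of_circleMean hv (r₀ := δ / 2 / (‖w‖ + 1)) (by positivity)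
      fun r hr hrr₀ => φ.normed_convolution_le_circleMean volume g.continuous fun x' hx' =>
        hps.le_circleMean_of_eqOn hδΩ hgu hr fun c hc => ?_
    have hx'x : dist x' x ≤ ρ := hx'
    have hcw : ‖c • w‖ ≤ δ / 2 := by
      calc ‖c • w‖ ≤ δ / 2 / (‖w‖ + 1) * (‖w‖ + 1) := by
            rw [norm_smul]; gcongr; exacts [hc.trans hrr₀, by linarith]
        _ = δ / 2 := div_mul_cancel₀ _ (by positivity)
    refine mem_cthickening_of_dist_le _ x δ Y hx ?_
    calc dist (x' + c • w) x ≤ dist x' x + ‖c • w‖ := by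
          rw [dist_eq_norm, dist_eq_norm, add_sub_right_comm]; exact norm_add_le _ _
      _ ≤ δ := by linarith [min_le_left (δ / 2) ρ₀]

theorem PlurisubharmonicOn.le_of_strip (hΩ : IsOpen Ω) (hu : ContinuousOn u Ω)
    (hps : PlurisubharmonicOn u Ω) {G : ℂ → (Fin n → ℂ)} (hG : Differentiable ℂ G)
    {Y : Set (Fin n → ℂ)} (hY : IsCompact Y) (hYΩ : Y ⊆ Ω)
    (hGY : ∀ c : ℂ, c.re ∈ Icc 0 1 → G c ∈ Y) {M : ℝ}
    (hM : ∀ c : ℂ, c.re = 0 ∨ c.re = 1 → u (G c) ≤ M) {c : ℂ} (hc : c.re ∈ Icc 0 1) :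
    u (G c) ≤ M := by
  refine le_of_forall_pos_le_add fun ε hε => ?_
  obtain ⟨v, hv, happrox, hL⟩ := hps.exists_contDiff_approx hΩ hu hY hYΩ (half_pos hε)
  obtain ⟨B, hB⟩ := hY.bddAbove_image hv.continuous.continuousOn
  have hbdry : ∀ c : ℂ, c.re = 0 ∨ c.re = 1 → v (G c) ≤ M + ε / 2 := fun c hc => by
    have hcY := hGY c (by rcases hc with h | h <;> simp [h])
    linarith [(abs_le.1 (happrox _ hcY)).2, hM c hc]
  have hvc := hv.le_of_strip hG (fun c hc => hL _ (hGY c (Ioo_subset_Icc_self hc)) _)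
    (fun c hc => hB (mem_image_of_mem v (hGY c hc))) hbdry hc
  linarith [(abs_le.1 (happrox _ (hGY c hc))).1]

variable {U : ℂ → (Fin n → ℂ) →ₗ[ℂ] (Fin n → ℂ)} {Z : Set (Fin n → ℂ)}

theorem PlurisubharmonicOn.le_of_strip_family (hΩ : IsOpen Ω) (hu : ContinuousOn u Ω)
    (hps : PlurisubharmonicOn u Ω) (hU : ∀ x, Differentiable ℂ fun c => U c x)
    (hUc : Continuous fun p : ℝ × (Fin n → ℂ) => U p.1 p.2) (hZ : IsCompact Z)
    (hrot : ∀ c : ℂ, ∀ z ∈ Z, ∃ z' ∈ Z, U c z = U c.re z')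
    (hZΩ : ∀ z ∈ Z, ∀ s ∈ Icc (0:ℝ) 1, U s z ∈ Ω) {M : ℝ}
    (hM : ∀ z ∈ Z, u (U 0 z) ≤ M ∧ u (U 1 z) ≤ M) {z : Fin n → ℂ} (hz : z ∈ Z) {s : ℝ}
    (hs : s ∈ Icc (0:ℝ) 1) : u (U s z) ≤ M := by
  set Y := (fun p : ℝ × (Fin n → ℂ) => U p.1 p.2) '' (Icc 0 1 ×ˢ Z)
  have hYΩ : Y ⊆ Ω := by
    rintro _ ⟨⟨s, z⟩, ⟨hs, hz⟩, rfl⟩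
    exact hZΩ z hz s hs
  refine hps.le_of_strip hΩ hu (hU z) ((isCompact_Icc.prod hZ).image hUc) hYΩ (fun c hc => ?_)
    (fun c hc => ?_) (c := s) (by simpa)
  · obtain ⟨z', hz', hzz'⟩ := hrot c z hz
    exact hzz' ▸ ⟨(c.re, z'), ⟨hc, hz'⟩, rfl⟩
  · obtain ⟨z', hz', hzz'⟩ := hrot c z hz
    rw [hzz']
    rcases hc with h | h <;> simp [h, hM z' hz']

theorem isOpen_setOf_forall_smul_mem_of_continuous
    (hUc : Continuous fun p : ℝ × (Fin n → ℂ) => U p.1 p.2) (hZ : IsCompact Z) (hΩ : IsOpen Ω) :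
    IsOpen {σ : ℝ | ∀ z ∈ Z, ∀ s ∈ Icc (0:ℝ) 1, U s (σ • z) ∈ Ω} := by
  have hcont : Continuous fun p : ℝ × ((Fin n → ℂ) × ℝ) => U p.2.2 (p.1 • p.2.1) := by
    simp only [LinearMap.map_smul_of_tower]
    exact continuous_fst.smul (hUc.comp (continuous_snd.snd.prodMk continuous_snd.fst))
  refine isOpen_iff_mem_nhds.2 fun σ hσ => ?_
  filter_upwards [(hZ.prod isCompact_Icc).eventually_forall_of_forall_eventually
    (P := fun σ' (q : (Fin n → ℂ) × ℝ) => U q.2 (σ' • q.1) ∈ Ω) fun q hq =>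
      hcont.continuousAt.eventually_mem (hΩ.mem_nhds (hσ q.1 hq.1 q.2 hq.2))] with σ' h z hz s hs
  exact h (z, s) ⟨hz, hs⟩

theorem isClosed_setOf_forall_smul_mem {C : Set (Fin n → ℂ)} (hC : IsClosed C) :
    IsClosed {σ : ℝ | ∀ z ∈ Z, ∀ s ∈ Icc (0:ℝ) 1, U s (σ • z) ∈ C} := by
  have hS : {σ : ℝ | ∀ z ∈ Z, ∀ s ∈ Icc (0:ℝ) 1, U s (σ • z) ∈ C}
      = ⋂ z ∈ Z, ⋂ s ∈ Icc (0:ℝ) 1, (fun σ : ℝ => σ • U s z) ⁻¹' C := by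
    ext σ
    simp only [LinearMap.map_smul_of_tower, mem_iInter, mem_preimage, mem_ofPred_eq]
  rw [hS]
  exact isClosed_biInter fun z _ => isClosed_biInter fun s _ =>
    hC.preimage (continuous_id.smul continuous_const)

end Plurisubharmonic

theorem IsPseudoconvex.image_subset_of_strip {n : ℕ} {Ω : Set (Fin n → ℂ)}
    (hΩ : IsPseudoconvex Ω) {U : ℂ → (Fin n → ℂ) →ₗ[ℂ] (Fin n → ℂ)}
    (hU : ∀ x, Differentiable ℂ fun c => U c x)
    (hUc : Continuous fun p : ℝ × (Fin n → ℂ) => U p.1 p.2) {Z : Set (Fin n → ℂ)}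
    (hZ : IsCompact Z) (hZσ : ∀ σ ∈ Icc (0:ℝ) 1, ∀ z ∈ Z, σ • z ∈ Z)
    (hrot : ∀ c : ℂ, ∀ z ∈ Z, ∃ z' ∈ Z, U c z = U c.re z')
    (h0 : U 0 '' Z ⊆ Ω) (h1 : U 1 '' Z ⊆ Ω) {t : ℝ} (ht : t ∈ Icc (0:ℝ) 1) :
    U t '' Z ⊆ Ω := by
  obtain ⟨hΩo, u, hu, hps, hexh⟩ := hΩ
  set K := U 0 '' Z ∪ U 1 '' Z
  have hKΩ : K ⊆ Ω := union_subset h0 h1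
  obtain ⟨M, hM⟩ := ((hZ.image (U 0).continuous_of_finiteDimensional).union
    (hZ.image (U 1).continuous_of_finiteDimensional)).bddAbove_image (hu.mono hKΩ)
  set C := {x | x ∈ Ω ∧ u x ≤ M}
  have hsmul : ∀ (c : ℂ) (σ : ℝ) (z : Fin n → ℂ), U c (σ • z) = σ • U c z := fun c σ z =>
    (U c).map_smul_of_tower σ z
  set S := {σ : ℝ | ∀ z ∈ Z, ∀ s ∈ Icc (0:ℝ) 1, U s (σ • z) ∈ C}
  have hSclosed : IsClosed S := isClosed_setOf_forall_smul_mem (hexh M).isClosed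
  have hS0 : (0:ℝ) ∈ S := fun z hz s _ => by
    have h0K : U 0 ((0:ℝ) • z) ∈ K := Or.inl ⟨_, hZσ 0 ⟨le_rfl, zero_le_one⟩ z hz, rfl⟩
    rw [hsmul, zero_smul] at h0K ⊢
    exact ⟨hKΩ h0K, hM (mem_image_of_mem u h0K)⟩
  have hstep : ∀ σ ∈ S ∩ Ico 0 1, S ∈ 𝓝[>] σ := by
    rintro σ ⟨hσS, hσ0, hσ1⟩
    have hopen := isOpen_setOf_forall_smul_mem_of_continuous hUc hZ hΩo
    filter_upwards [nhdsWithin_le_nhds (hopen.mem_nhds fun z hz s hs => (hσS z hz s hs).1),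
      Ico_mem_nhdsGT hσ1] with σ' hσ'Ω hσ' z hz s hs
    refine ⟨hσ'Ω z hz s hs, hps.le_of_strip_family hΩo hu hU hUc
      (hZ.image (continuous_const_smul σ')) ?_ ?_ ?_ (mem_image_of_mem _ hz) hs⟩
    · rintro c _ ⟨z, hz, rfl⟩
      obtain ⟨z', hz', h⟩ := hrot c z hz
      exact ⟨σ' • z', mem_image_of_mem _ hz', by rw [hsmul, hsmul, h]⟩
    · rintro _ ⟨z, hz, rfl⟩ s hs
      exact hσ'Ω z hz s hs
    · rintro _ ⟨z, hz, rfl⟩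
      have hz' := hZσ σ' ⟨hσ0.trans hσ'.1, hσ'.2.le⟩ z hz
      exact ⟨hM (mem_image_of_mem u (Or.inl (mem_image_of_mem _ hz'))),
        hM (mem_image_of_mem u (Or.inr (mem_image_of_mem _ hz')))⟩
  have h1S := hSclosed.inter isClosed_Icc |>.Icc_subset_of_forall_mem_nhdsWithin hS0 hstep
    ⟨zero_le_one, le_rfl⟩
  rintro _ ⟨z, hz, rfl⟩
  simpa using (h1S z hz t ht).1

namespace PosDefHermForm

variable {n : ℕ} (h : PosDefHermForm n)

theorem form_add_right (z w w' : Fin n → ℂ) : h.form z (w + w') = h.form z w + h.form z w' := by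
  rw [h.conj_symm, h.add_left, map_add, ← h.conj_symm, ← h.conj_symm]

theorem form_smul_right (a : ℂ) (z w : Fin n → ℂ) :
    h.form z (a • w) = starRingEnd ℂ a * h.form z w := by
  rw [h.conj_symm, h.smul_left, map_mul, ← h.conj_symm]

noncomputable def toSesqForm : (Fin n → ℂ) →ₗ[ℂ] (Fin n → ℂ) →ₗ⋆[ℂ] ℂ :=
  LinearMap.mk₂'ₛₗ _ _ h.form h.add_left h.smul_left h.form_add_right h.form_smul_right

theorem re_form_self_eq_sum_normSq {ι : Type*} [Fintype ι] [DecidableEq ι]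
    {b : Module.Basis ι ℂ (Fin n → ℂ)}
    (horth : ∀ i j, h.form (b i) (b j) = if i = j then 1 else 0) (x : Fin n → ℂ) :
    (h.form x x).re = ∑ i, normSq (b.repr x i) := by
  have hx : h.form x x = h.toSesqForm x x := rfl
  conv_lhs => rw [hx, ← b.sum_repr x]
  simp only [map_sum, map_smul, map_smulₛₗ, LinearMap.sum_apply, LinearMap.smul_apply]
  simp [toSesqForm, horth, normSq_apply]

theorem mem_ball_iff_sum_normSq_lt {ι : Type*} [Fintype ι] [DecidableEq ι]
    {b : Module.Basis ι ℂ (Fin n → ℂ)}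
    (horth : ∀ i j, h.form (b i) (b j) = if i = j then 1 else 0) (x : Fin n → ℂ) :
    x ∈ h.ball ↔ ∑ i, normSq (b.repr x i) < 1 := by
  rw [ball, mem_ofPred_eq, h.re_form_self_eq_sum_normSq horth]

end PosDefHermForm

namespace Module.Basis

variable {ι E : Type*} [Fintype ι] [NormedAddCommGroup E] [NormedSpace ℂ E]
  (b : Module.Basis ι ℂ E)

theorem sum_normSq_repr_smul (σ : ℝ) (x : E) :
    ∑ i, normSq (b.repr (σ • x) i) = σ ^ 2 * ∑ i, normSq (b.repr x i) := by
  rw [← Complex.coe_smul, map_smul, Finset.mul_sum]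
  simp only [Finsupp.smul_apply, smul_eq_mul, normSq_mul, normSq_ofReal, sq]

theorem isCompact_setOf_sum_normSq_repr_le [FiniteDimensional ℂ E] (r : ℝ) :
    IsCompact {x : E | ∑ i, normSq (b.repr x i) ≤ r} := by
  set S := {ζ : ι → ℂ | ∑ i, normSq (ζ i) ≤ r}
  have hSball : S ⊆ closedBall 0 √r := fun ζ hζ => by
    rw [mem_closedBall_zero_iff, pi_norm_le_iff_of_nonneg (Real.sqrt_nonneg r)]
    exact fun i => (norm_def _).trans_le <| Real.sqrt_le_sqrt <|
      (Finset.single_le_sum (fun j _ => normSq_nonneg (ζ j)) (Finset.mem_univ i)).trans hζ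
  have hS : IsCompact S := (isCompact_closedBall 0 √r).of_isClosed_subset
    (isClosed_le (by fun_prop) continuous_const) hSball
  simpa [S] using b.equivFunL.toHomeomorph.isCompact_preimage.2 hS

variable [DecidableEq ι] (m : ι → ℝ)

/-- The operator `exp (c M)`, where `M` is diagonal in the basis `b` with real entries `m`. -/
noncomputable def diagExp (c : ℂ) : E →ₗ[ℂ] E :=
  Matrix.toLin b b (Matrix.diagonal fun i => exp (c * m i))

theorem diagExp_apply (c : ℂ) (x : E) :
    b.diagExp m c x = ∑ i, (exp (c * m i) * b.repr x i) • b i := by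
  simp [diagExp, Matrix.toLin_apply, Matrix.mulVec_diagonal]

theorem repr_diagExp (c : ℂ) (x : E) (i : ι) :
    b.repr (b.diagExp m c x) i = exp (c * m i) * b.repr x i := by
  rw [diagExp_apply, repr_sum_self]

theorem diagExp_self (c : ℂ) (i : ι) : b.diagExp m c (b i) = exp (c * m i) • b i := by
  simp [diagExp_apply, Finsupp.single_apply]

theorem diagExp_zero : b.diagExp m 0 = LinearMap.id :=
  b.ext fun i => by simp [diagExp_self]

theorem diagExp_add (c d : ℂ) : b.diagExp m (c + d) = b.diagExp m c ∘ₗ b.diagExp m d :=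
  b.ext fun i => by
    rw [LinearMap.comp_apply, diagExp_self, diagExp_self, map_smul, diagExp_self, smul_smul,
      add_mul, exp_add, mul_comm]

theorem differentiable_diagExp (x : E) : Differentiable ℂ fun c => b.diagExp m c x := by
  simp only [diagExp_apply]
  fun_prop

theorem continuous_diagExp [FiniteDimensional ℂ E] :
    Continuous fun p : ℝ × E => b.diagExp m p.1 p.2 := by
  have hcoord : ∀ i, Continuous fun x => b.repr x i := fun i =>
    (b.coord i).continuous_of_finiteDimensional
  simp only [diagExp_apply]
  fun_prop

theorem sum_normSq_repr_diagExp_mul_I (y : ℝ) (x : E) :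
    ∑ i, normSq (b.repr (b.diagExp m (y * I) x) i) = ∑ i, normSq (b.repr x i) := by
  have hexp : ∀ i, ‖exp (y * I * m i)‖ = 1 := fun i => by
    rw [mul_right_comm, ← ofReal_mul, norm_exp_ofReal_mul_I]
  simp [repr_diagExp, normSq_eq_norm_sq, hexp]

end Module.Basis

theorem geodesic_convexity_general {n : ℕ} (Ω : Set (Fin n → ℂ))
    (hΩ : IsPseudoconvex Ω)
    (h : PosDefHermForm n)
    (A : (Fin n → ℂ) →ₗ[ℂ] (Fin n → ℂ))
    (b : Module.Basis (Fin n) ℂ (Fin n → ℂ)) (c : Fin n → ℝ)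
    (hc : ∀ i, 0 < c i)
    (horth : ∀ i j, h.form (b i) (b j) = if i = j then 1 else 0)
    (heig : ∀ i, A (b i) = (c i : ℂ) • b i)
    (Apow : ℝ → ((Fin n → ℂ) →ₗ[ℂ] (Fin n → ℂ)))
    (hApow : ∀ (t : ℝ) (i : Fin n), Apow t (b i) = ((c i ^ t : ℝ) : ℂ) • b i)
    (hE0 : h.ball ⊆ Ω) (hE1 : ⇑A '' h.ball ⊆ Ω) :
    ∀ t : ℝ, t ∈ Set.Icc (0:ℝ) 1 → ⇑(Apow t) '' h.ball ⊆ Ω := by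
  rintro t ht _ ⟨x, hx, rfl⟩
  set U := b.diagExp fun i => Real.log (c i)
  have hUt : ∀ t : ℝ, U t = Apow t := fun t => b.ext fun i => by
    rw [Module.Basis.diagExp_self, hApow, Real.rpow_def_of_pos (hc i), ofReal_exp, ofReal_mul,
      mul_comm]
  have hU1 : U 1 = A := by
    simpa using (hUt 1).trans (b.ext fun i => by rw [hApow, Real.rpow_one, heig])
  set Z := {z | ∑ i, normSq (b.repr z i) ≤ ∑ i, normSq (b.repr x i)}
  have hZball : Z ⊆ h.ball := fun z hz => (h.mem_ball_iff_sum_normSq_lt horth z).2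
    (hz.trans_lt ((h.mem_ball_iff_sum_normSq_lt horth x).1 hx))
  refine hΩ.image_subset_of_strip (U := U) (Z := Z) (b.differentiable_diagExp _)
    (b.continuous_diagExp _) (b.isCompact_setOf_sum_normSq_repr_le _) (fun σ hσ z hz => ?_)
    (fun ξ z hz => ?_) ?_ ?_ ht ⟨x, by simp [Z], by rw [hUt]⟩
  · simp only [Z, mem_ofPred_eq, b.sum_normSq_repr_smul] at hz ⊢
    exact (mul_le_of_le_one_left (Finset.sum_nonneg fun i _ => normSq_nonneg _)
      (pow_le_one₀ hσ.1 hσ.2)).trans hz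
  · -- `U (i y)` is `h`-unitary, and `U ξ = U ξ.re ∘ U (i ξ.im)`
    refine ⟨U (ξ.im * I) z, ?_, ?_⟩
    · simpa [Z, U, b.sum_normSq_repr_diagExp_mul_I] using hz
    · rw [← LinearMap.comp_apply, ← b.diagExp_add, re_add_im]
  · rw [show U 0 = LinearMap.id from b.diagExp_zero _]; simpa using hZball.trans hE0
  · rw [hU1]; exact (image_mono hZball).trans hE1

/-- Theorem 1.3: geodesic convexity of the inscribed ellipsoids.
If the endpoints `E₀` (unit ball of `h`) and `E₁ = A(E₀)` of the geodesic
`t ↦ A^t(E₀)` are contained in the pseudoconvex domain `Ω`, then so is every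
`A^t(E₀)`, `t ∈ [0,1]`. -/
theorem geodesic_convexity {n : ℕ} (Ω : Set (Fin n → ℂ))
    (hΩ : IsPseudoconvex Ω) (hconn : IsConnected Ω)
    (h : PosDefHermForm n)
    (A : (Fin n → ℂ) →ₗ[ℂ] (Fin n → ℂ))
    (hsa : ∀ z w, h.form (A z) w = h.form z (A w))
    (hposA : ∀ z, z ≠ 0 → 0 < (h.form (A z) z).re)
    (b : Module.Basis (Fin n) ℂ (Fin n → ℂ)) (c : Fin n → ℝ)
    (hc : ∀ i, 0 < c i)
    (horth : ∀ i j, h.form (b i) (b j) = if i = j then 1 else 0)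
    (heig : ∀ i, A (b i) = (c i : ℂ) • b i)
    (Apow : ℝ → ((Fin n → ℂ) →ₗ[ℂ] (Fin n → ℂ)))
    (hApow : ∀ (t : ℝ) (i : Fin n), Apow t (b i) = ((c i ^ t : ℝ) : ℂ) • b i)
    (hE0 : h.ball ⊆ Ω) (hE1 : ⇑A '' h.ball ⊆ Ω) :
    ∀ t : ℝ, t ∈ Set.Icc (0:ℝ) 1 → ⇑(Apow t) '' h.ball ⊆ Ω :=
  geodesic_convexity_general Ω hΩ h A b c hc horth heig Apow hApow hE0 hE1
end

section
/- Let λ > 1 and Ω = {z ∈ ℂ² : |z-p||z+p| < λ²} with p = (1,0). Then Ω is path-connected: for any z = (x,y) ∈ Ω and t ∈ [0,1], the point z_t = (Re x + it·Im x, t·y) satisfies |z_t - p| ≤ |z - p| and |z_t + p| ≤ |z + p|, hence z_t ∈ Ω; and Ω ∩ (ℝ×{0}) = (-√(λ²+1), √(λ²+1)) × {0} is connected. -/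
open Complex MeasureTheory Bornology

/-- Cassini ovaloid `{z ∈ ℂ² : |z-p||z+p| < λ²}`, `p = (1,0)`, written with
squared hermitian distances. -/
def cassini (lam : ℝ) : Set (ℂ × ℂ) :=
  {z | (Complex.normSq (z.1 - 1) + Complex.normSq z.2) *
       (Complex.normSq (z.1 + 1) + Complex.normSq z.2) < lam^4}


/-! The deformation `z_t = (Re x + i t Im x, t y)` fixes `Re x` and shrinks `Im x` and `y`, so it
moves `z` closer to every real point of `ℂ × {0}`, in particular to `±p`; hence it preserves the
Cassini ovaloid and retracts it onto its real slice, which is an interval. -/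

open Set

def shrinkToReal (t : ℝ) (z : ℂ × ℂ) : ℂ × ℂ :=
  ((z.1.re : ℂ) + (t : ℂ) * z.1.im * I, (t : ℂ) * z.2)

@[simp]
lemma shrinkToReal_zero (z : ℂ × ℂ) : shrinkToReal 0 z = ((z.1.re : ℂ), 0) := by
  simp [shrinkToReal]

@[simp]
lemma shrinkToReal_one (z : ℂ × ℂ) : shrinkToReal 1 z = z := by
  simp [shrinkToReal, Complex.re_add_im]

lemma continuous_shrinkToReal (z : ℂ × ℂ) : Continuous fun t => shrinkToReal t z := by
  unfold shrinkToReal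
  fun_prop

lemma normSq_shrinkToReal_sub_le {t : ℝ} (ht : |t| ≤ 1) (z : ℂ × ℂ) {a : ℂ} (ha : a.im = 0) :
    normSq ((shrinkToReal t z).1 - a) + normSq (shrinkToReal t z).2
      ≤ normSq (z.1 - a) + normSq z.2 := by
  have ht2 : t ^ 2 ≤ 1 := sq_le_one_iff_abs_le_one t |>.2 ht
  have him : (t * z.1.im) ^ 2 ≤ z.1.im ^ 2 := by
    rw [mul_pow]; exact mul_le_of_le_one_left (sq_nonneg _) ht2
  have hy : normSq ((t : ℂ) * z.2) ≤ normSq z.2 := by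
    rw [normSq_mul, normSq_ofReal, ← sq]; exact mul_le_of_le_one_left (normSq_nonneg _) ht2
  have hx : normSq ((shrinkToReal t z).1 - a) = (z.1.re - a.re) ^ 2 + (t * z.1.im) ^ 2 := by
    simp [shrinkToReal, normSq_apply, ha]; ring
  have hx' : normSq (z.1 - a) = (z.1.re - a.re) ^ 2 + z.1.im ^ 2 := by
    simp [normSq_apply, ha]; ring
  rw [hx, hx']
  exact add_le_add (by linarith) hy

lemma mem_cassini_of_le {lam : ℝ} {w z : ℂ × ℂ}
    (h₁ : normSq (w.1 - 1) + normSq w.2 ≤ normSq (z.1 - 1) + normSq z.2)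
    (h₂ : normSq (w.1 + 1) + normSq w.2 ≤ normSq (z.1 + 1) + normSq z.2)
    (hz : z ∈ cassini lam) : w ∈ cassini lam :=
  lt_of_le_of_lt
    (mul_le_mul h₁ h₂ (add_nonneg (normSq_nonneg _) (normSq_nonneg _))
      (add_nonneg (normSq_nonneg _) (normSq_nonneg _))) hz

lemma normSq_shrinkToReal_add_one_le {t : ℝ} (ht : |t| ≤ 1) (z : ℂ × ℂ) :
    normSq ((shrinkToReal t z).1 + 1) + normSq (shrinkToReal t z).2
      ≤ normSq (z.1 + 1) + normSq z.2 := by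
  simpa only [sub_neg_eq_add] using normSq_shrinkToReal_sub_le ht z (a := -1) (by simp)

lemma shrinkToReal_mem_cassini {lam t : ℝ} (ht : |t| ≤ 1) {z : ℂ × ℂ} (hz : z ∈ cassini lam) :
    shrinkToReal t z ∈ cassini lam :=
  mem_cassini_of_le (normSq_shrinkToReal_sub_le ht z (by simp))
    (normSq_shrinkToReal_add_one_le ht z) hz

lemma ofReal_mem_cassini_iff {lam : ℝ} (hlam : 1 < lam) (r : ℝ) :
    ((r : ℂ), (0 : ℂ)) ∈ cassini lam ↔ r ^ 2 < lam ^ 2 + 1 := by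
  have hprod : normSq ((r : ℂ) - 1) * normSq ((r : ℂ) + 1) = (r ^ 2 - 1) ^ 2 := by
    simp [normSq_apply]; ring
  have hlam2 : 1 < lam ^ 2 := one_lt_pow₀ hlam two_ne_zero
  simp only [cassini, mem_ofPred_eq, map_zero, add_zero, hprod]
  rw [show lam ^ 4 = (lam ^ 2) ^ 2 by ring, sq_lt_sq, abs_of_pos (by positivity : 0 < lam ^ 2),
    abs_lt]
  constructor
  · rintro ⟨-, h⟩; linarith
  · intro h; exact ⟨by linarith [sq_nonneg r], by linarith⟩

lemma eq_ofReal_re_zero {z : ℂ × ℂ} (h₁ : z.1.im = 0) (h₂ : z.2 = 0) :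
    z = ((z.1.re : ℂ), 0) :=
  Prod.ext (Complex.ext (by simp) (by simp [h₁])) h₂

lemma cassini_inter_real {lam : ℝ} (hlam : 1 < lam) :
    {z ∈ cassini lam | z.1.im = 0 ∧ z.2 = 0}
      = {z : ℂ × ℂ | z.2 = 0 ∧ z.1.im = 0 ∧ z.1.re ^ 2 < lam ^ 2 + 1} := by
  ext z
  simp only [mem_ofPred_eq]
  constructor
  · rintro ⟨hz, h₁, h₂⟩
    rw [eq_ofReal_re_zero h₁ h₂, ofReal_mem_cassini_iff hlam] at hz
    exact ⟨h₂, h₁, hz⟩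
  · rintro ⟨h₂, h₁, hre⟩
    refine ⟨?_, h₁, h₂⟩
    rw [eq_ofReal_re_zero h₁ h₂, ofReal_mem_cassini_iff hlam]
    exact hre

lemma joinedIn_cassini_re_zero {lam : ℝ} {z : ℂ × ℂ} (hz : z ∈ cassini lam) :
    JoinedIn (cassini lam) ((z.1.re : ℂ), 0) z :=
  JoinedIn.ofLine (continuous_shrinkToReal z).continuousOn (shrinkToReal_zero z)
    (shrinkToReal_one z) (image_subset_iff.2 fun _ ht =>
      shrinkToReal_mem_cassini ((abs_of_nonneg ht.1).trans_le ht.2) hz)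

lemma joinedIn_cassini_zero_ofReal {lam : ℝ} (hlam : 1 < lam) {r : ℝ}
    (hr : r ^ 2 < lam ^ 2 + 1) : JoinedIn (cassini lam) 0 ((r : ℂ), 0) := by
  refine JoinedIn.ofLine (f := fun t : ℝ => (((t * r : ℝ) : ℂ), (0 : ℂ)))
    (by fun_prop) (by simp) (by simp) (image_subset_iff.2 fun t ht => ?_)
  rw [mem_preimage, ofReal_mem_cassini_iff hlam, mul_pow]
  exact lt_of_le_of_lt (mul_le_of_le_one_left (sq_nonneg r) (pow_le_one₀ ht.1 ht.2)) hr

lemma isPathConnected_cassini {lam : ℝ} (hlam : 1 < lam) : IsPathConnected (cassini lam) := by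
  have hzero : (0 : ℂ × ℂ) ∈ cassini lam := by
    simpa [← Prod.zero_eq_mk] using (ofReal_mem_cassini_iff hlam 0).2 (by norm_num; positivity)
  refine ⟨0, hzero, fun z hz => ?_⟩
  have hre : ((z.1.re : ℂ), (0 : ℂ)) ∈ cassini lam := by
    simpa using shrinkToReal_mem_cassini (t := 0) (by simp) hz
  exact (joinedIn_cassini_zero_ofReal hlam ((ofReal_mem_cassini_iff hlam _).1 hre)).trans
    (joinedIn_cassini_re_zero hz)

/-- for `λ > 1` the Cassini ovaloid is path-connected; the
deformation `z_t = (Re x + i t Im x, t y)` stays in `Ω` and decreases both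
distances to `±p`, and the real slice is the interval `(-√(λ²+1), √(λ²+1))`. -/
theorem cassini_connected (lam : ℝ) (hlam : 1 < lam) :
    (∀ z ∈ cassini lam, ∀ t : ℝ, t ∈ Set.Icc (0:ℝ) 1 →
      (Complex.normSq (((z.1.re : ℂ) + (t : ℂ) * z.1.im * Complex.I) - 1)
          + Complex.normSq ((t : ℂ) * z.2)
        ≤ Complex.normSq (z.1 - 1) + Complex.normSq z.2) ∧
      (Complex.normSq (((z.1.re : ℂ) + (t : ℂ) * z.1.im * Complex.I) + 1)
          + Complex.normSq ((t : ℂ) * z.2)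
        ≤ Complex.normSq (z.1 + 1) + Complex.normSq z.2) ∧
      (((z.1.re : ℂ) + (t : ℂ) * z.1.im * Complex.I), (t : ℂ) * z.2) ∈ cassini lam) ∧
    {z ∈ cassini lam | z.1.im = 0 ∧ z.2 = 0}
      = {z : ℂ × ℂ | z.2 = 0 ∧ z.1.im = 0 ∧ z.1.re^2 < lam^2 + 1} ∧
    IsPathConnected (cassini lam) := by
  refine ⟨fun z hz t ht => ?_, cassini_inter_real hlam, isPathConnected_cassini hlam⟩
  have ht' : |t| ≤ 1 := (abs_of_nonneg ht.1).trans_le ht.2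
  exact ⟨normSq_shrinkToReal_sub_le ht' z (by simp), normSq_shrinkToReal_add_one_le ht' z,
    shrinkToReal_mem_cassini ht' hz⟩
end
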